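/- The maximal density for maximum degree 6 equals 4/5: (a) every S ⊆ ℤ² with N_S(x) ≤ 6 for all x ∈ S has upper density at most 4/5; and (b) the set S₀ = {x ∈ ℤ² : x₁ + 2x₂ ≢ 0 (mod 5)} satisfies N_{S₀}(x) ≤ 6 for all x ∈ S₀ and has density exactly 4/5. -/

import Mathlib

/-!
Upper bound: double count the neighbouring pairs `(x, y)` with `x ∈ S ∩ B_r` and
`y ∈ B_{r+1} \ S`. Each such `x` has at least two neighbours outside `S` and each `y` at most
eight neighbours, so `|S ∩ B_r| ≤ 4 |B_{r+1} \ S|`, whence `5 |S ∩ B_r| ≤ 4 (2r + 1)²`.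

Extremal set: `S₀` is the complement of the index-5 lattice `x₁ + 2 x₂ ≡ 0 (mod 5)`. The eight
neighbour offsets `d` take every nonzero value of `d₁ + 2 d₂ (mod 5)` exactly twice, so every point
of `S₀` has exactly two neighbours in the lattice; and every row of `B_r` meets the lattice in one
of each five consecutive points, which gives density `4/5` with error `O(1/r)`.
-/

open Filter Topology

/-- `y` is a neighbor of `x` in the 8-point (Moore) neighborhood of `ℤ²`. -/
def IsNbr (x y : ℤ × ℤ) : Prop :=
  y ≠ x ∧ |y.1 - x.1| ≤ 1 ∧ |y.2 - x.2| ≤ 1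

/-- `N_S(x)`: the number of neighbors of `x` lying in `S`. -/
noncomputable def nbrCount (S : Set (ℤ × ℤ)) (x : ℤ × ℤ) : ℕ :=
  Set.ncard {y ∈ S | IsNbr x y}

/-- The box `B_r = {x : |x₁| < r, |x₂| < r}`. -/
def box (r : ℕ) : Set (ℤ × ℤ) :=
  {x | |x.1| < (r : ℤ) ∧ |x.2| < (r : ℤ)}

/-- The upper density of `S ⊆ ℤ²`: `limsup_{r → ∞} |S ∩ B_r| / (2r-1)²`. -/
noncomputable def upperDensity (S : Set (ℤ × ℤ)) : ℝ :=
  limsup (fun r : ℕ => (Set.ncard (S ∩ box r) : ℝ) / (2 * (r : ℝ) - 1) ^ 2) atTop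

/-- `S` has density `d`: the sequence `|S ∩ B_r| / (2r-1)²` tends to `d`. -/
def HasDensity (S : Set (ℤ × ℤ)) (d : ℝ) : Prop :=
  Tendsto (fun r : ℕ => (Set.ncard (S ∩ box r) : ℝ) / (2 * (r : ℝ) - 1) ^ 2) atTop (𝓝 d)

open Finset

section Neighbors

variable {x y : ℤ × ℤ} {S : Set (ℤ × ℤ)}

theorem IsNbr.symm (h : IsNbr x y) : IsNbr y x := by
  obtain ⟨hne, h1, h2⟩ := h
  exact ⟨hne.symm, abs_sub_comm y.1 x.1 ▸ h1, abs_sub_comm y.2 x.2 ▸ h2⟩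

noncomputable def nbrs (x : ℤ × ℤ) : Finset (ℤ × ℤ) :=
  (Icc (x.1 - 1) (x.1 + 1) ×ˢ Icc (x.2 - 1) (x.2 + 1)).erase x

theorem mem_nbrs : y ∈ nbrs x ↔ IsNbr x y := by
  simp only [nbrs, mem_erase, mem_product, mem_Icc, IsNbr, abs_le, ne_eq, Prod.ext_iff]
  omega

theorem card_nbrs (x : ℤ × ℤ) : #(nbrs x) = 8 := by
  have h3 (a : ℤ) : (a + 1 + 1 - (a - 1)).toNat = 3 := by omega
  rw [nbrs, card_erase_of_mem (by simp), card_product, Int.card_Icc, Int.card_Icc, h3, h3]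

theorem nbrCount_eq_card_filter [DecidablePred (· ∈ S)] (x : ℤ × ℤ) :
    nbrCount S x = #{y ∈ nbrs x | y ∈ S} := by
  rw [nbrCount, ← Set.ncard_coe_finset]
  congr 1
  ext y
  simp [mem_nbrs, and_comm]

theorem nbrCount_add_card_filter_notMem [DecidablePred (· ∈ S)] (x : ℤ × ℤ) :
    nbrCount S x + #{y ∈ nbrs x | y ∉ S} = 8 := by
  rw [nbrCount_eq_card_filter, card_filter_add_card_filter_not, card_nbrs]

end Neighbors

section Boxes

noncomputable def boxSide (r : ℕ) : Finset ℤ := Ico (1 - r) r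

noncomputable def boxFinset (r : ℕ) : Finset (ℤ × ℤ) := boxSide r ×ˢ boxSide r

theorem card_boxSide (r : ℕ) : #(boxSide r) = 2 * r - 1 := by
  rw [boxSide, Int.card_Ico]
  omega

theorem card_boxFinset (r : ℕ) : #(boxFinset r) = (2 * r - 1) ^ 2 := by
  rw [boxFinset, card_product, card_boxSide, sq]

theorem mem_boxFinset {r : ℕ} {x : ℤ × ℤ} : x ∈ boxFinset r ↔ x ∈ box r := by
  simp only [boxFinset, boxSide, mem_product, mem_Ico, _root_.box, Set.mem_ofPred_eq, abs_lt]
  omega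

theorem ncard_inter_box (S : Set (ℤ × ℤ)) [DecidablePred (· ∈ S)] (r : ℕ) :
    (S ∩ box r).ncard = #{x ∈ boxFinset r | x ∈ S} := by
  rw [← Set.ncard_coe_finset]
  congr 1
  ext x
  simp [mem_boxFinset, and_comm]

theorem boxFinset_mono : Monotone boxFinset := fun r s hrs x hx => by
  simp only [boxFinset, boxSide, mem_product, mem_Ico] at hx ⊢
  omega

theorem nbrs_subset_boxFinset_succ {r : ℕ} {x : ℤ × ℤ} (hx : x ∈ boxFinset r) :
    nbrs x ⊆ boxFinset (r + 1) := by
  intro y hy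
  simp only [nbrs, boxFinset, boxSide, mem_erase, mem_product, mem_Icc, mem_Ico] at hx hy ⊢
  omega

end Boxes

open scoped Classical in
theorem add_eight_mul_ncard_inter_box_le {S : Set (ℤ × ℤ)} {k : ℕ}
    (hS : ∀ x ∈ S, nbrCount S x + k ≤ 8) (r : ℕ) :
    (k + 8) * (S ∩ box r).ncard ≤ 8 * (2 * r + 1) ^ 2 := by
  set A := {x ∈ boxFinset r | x ∈ S}
  set C := {y ∈ boxFinset (r + 1) | y ∉ S}
  have hA : ∀ x ∈ A, k ≤ #(C.bipartiteAbove IsNbr x) := by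
    intro x hx
    rw [mem_filter] at hx
    have hk : k ≤ #{y ∈ nbrs x | y ∉ S} := by
      have := nbrCount_add_card_filter_notMem (S := S) x
      have := hS x hx.2
      omega
    refine hk.trans (card_le_card fun y hy => ?_)
    rw [mem_filter] at hy
    exact (mem_bipartiteAbove _).2
      ⟨mem_filter.2 ⟨nbrs_subset_boxFinset_succ hx.1 hy.1, hy.2⟩, mem_nbrs.1 hy.1⟩
  have hC : ∀ y ∈ C, #(A.bipartiteBelow IsNbr y) ≤ 8 := fun y _ =>
    card_nbrs y ▸ card_le_card fun x hx => mem_nbrs.2 ((mem_bipartiteBelow _).1 hx).2.symm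
  have hAC : #A + #C ≤ (2 * r + 1) ^ 2 := by
    rw [show 2 * r + 1 = 2 * (r + 1) - 1 by omega, ← card_boxFinset,
      ← card_filter_add_card_filter_not (s := boxFinset (r + 1)) (p := (· ∈ S))]
    exact Nat.add_le_add_right (card_le_card (filter_subset_filter _ (boxFinset_mono r.le_succ))) _
  rw [ncard_inter_box]
  nlinarith [card_mul_le_card_mul IsNbr hA hC]

theorem tendsto_two_mul_sub_one_atTop :
    Tendsto (fun r : ℕ => 2 * (r : ℝ) - 1) atTop atTop :=
  tendsto_atTop_add_const_right _ _ (tendsto_natCast_atTop_atTop.const_mul_atTop two_pos)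

theorem upperDensity_le_of_ncard_inter_box_le {S : Set (ℤ × ℤ)} {d : ℝ}
    (h : ∀ r : ℕ, ((S ∩ box r).ncard : ℝ) ≤ d * (2 * r + 1) ^ 2) : upperDensity S ≤ d := by
  set g := fun r : ℕ => d * (1 + 2 / (2 * (r : ℝ) - 1)) ^ 2
  have hg : Tendsto g atTop (𝓝 d) := by
    have := ((tendsto_const_nhds (x := (2 : ℝ))).div_atTop tendsto_two_mul_sub_one_atTop)
    simpa using (((tendsto_const_nhds (x := (1 : ℝ))).add this).pow 2).const_mul d
  have hle : ∀ᶠ r : ℕ in atTop,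
      ((S ∩ box r).ncard : ℝ) / (2 * (r : ℝ) - 1) ^ 2 ≤ g r := by
    filter_upwards [tendsto_two_mul_sub_one_atTop.eventually_gt_atTop 0] with r hr
    rw [div_le_iff₀ (by positivity)]
    calc ((S ∩ box r).ncard : ℝ) ≤ d * (2 * r + 1) ^ 2 := h r
      _ = g r * (2 * (r : ℝ) - 1) ^ 2 := by
        simp only [g]
        field_simp
        ring
  exact (limsup_le_limsup hle (isCoboundedUnder_le_of_le atTop fun r => by positivity)
    hg.isBoundedUnder_le).trans hg.limsup_eq.le

theorem upperDensity_le_of_nbrCount_add_le {S : Set (ℤ × ℤ)} {k : ℕ}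
    (hS : ∀ x ∈ S, nbrCount S x + k ≤ 8) : upperDensity S ≤ 8 / (k + 8) := by
  refine upperDensity_le_of_ncard_inter_box_le fun r => ?_
  rw [div_mul_eq_mul_div, le_div_iff₀ (by positivity), mul_comm]
  exact_mod_cast add_eight_mul_ncard_inter_box_le hS r

theorem nbrCount_le_six_of_two_nbrs_notMem {S : Set (ℤ × ℤ)} {x y₁ y₂ : ℤ × ℤ} (hne : y₁ ≠ y₂)
    (h₁ : IsNbr x y₁) (h₂ : IsNbr x y₂) (hy₁ : y₁ ∉ S) (hy₂ : y₂ ∉ S) : nbrCount S x ≤ 6 := by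
  classical
  have hsub : {y₁, y₂} ⊆ {y ∈ nbrs x | y ∉ S} := by
    simp only [insert_subset_iff, singleton_subset_iff, mem_filter, mem_nbrs]
    exact ⟨⟨h₁, hy₁⟩, h₂, hy₂⟩
  have := card_pair hne ▸ card_le_card hsub
  have := nbrCount_add_card_filter_notMem (S := S) x
  omega

def fiveLattice : Set (ℤ × ℤ) := {x | x.1 + 2 * x.2 ≡ 0 [ZMOD 5]}

theorem exists_two_nbrs_mem_fiveLattice {x : ℤ × ℤ} (hx : x ∉ fiveLattice) :
    ∃ y₁ y₂, y₁ ≠ y₂ ∧ IsNbr x y₁ ∧ IsNbr x y₂ ∧ y₁ ∈ fiveLattice ∧ y₂ ∈ fiveLattice := by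
  obtain ⟨a, b⟩ := x
  simp only [fiveLattice, Set.mem_ofPred_eq, Int.ModEq] at hx ⊢
  have : (a + 2 * b) % 5 = 1 ∨ (a + 2 * b) % 5 = 2 ∨ (a + 2 * b) % 5 = 3 ∨
      (a + 2 * b) % 5 = 4 := by omega
  rcases this with h | h | h | h
  · refine ⟨(a - 1, b), (a + 1, b - 1), ?_⟩
    simp [IsNbr]
    omega
  · refine ⟨(a + 1, b + 1), (a, b - 1), ?_⟩
    simp [IsNbr]
    omega
  · refine ⟨(a, b + 1), (a - 1, b - 1), ?_⟩
    simp [IsNbr]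
    omega
  · refine ⟨(a - 1, b + 1), (a + 1, b), ?_⟩
    simp [IsNbr]
    omega

theorem nbrCount_compl_fiveLattice_le {x : ℤ × ℤ} (hx : x ∈ fiveLatticeᶜ) :
    nbrCount fiveLatticeᶜ x ≤ 6 := by
  obtain ⟨y₁, y₂, hne, h₁, h₂, hy₁, hy₂⟩ := exists_two_nbrs_mem_fiveLattice hx
  exact nbrCount_le_six_of_two_nbrs_notMem hne h₁ h₂ (not_not_intro hy₁) (not_not_intro hy₂)

theorem Int.abs_mul_Ico_filter_modEq_card_sub_lt (a b v : ℤ) {m : ℤ} (hm : 0 < m) (hab : a ≤ b) :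
    |m * #{x ∈ Ico a b | x ≡ v [ZMOD m]} - (b - a)| < m := by
  have hmQ : (0 : ℚ) < m := Int.cast_pos.2 hm
  set u : ℚ := (b - v) / m
  set w : ℚ := (a - v) / m
  have hwu : w ≤ u := by
    have : (a : ℚ) ≤ b := Int.cast_le.2 hab
    simp only [u, w]
    gcongr
  rw [Int.Ico_filter_modEq_card _ _ hm, max_eq_left (sub_nonneg.2 (Int.ceil_mono hwu)),
    ← Int.cast_lt (R := ℚ)]
  have hba : (b : ℚ) - a = m * (u - w) := by
    simp only [u, w]
    field_simp
    ring
  push_cast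
  rw [hba, ← mul_sub, abs_mul, abs_of_pos hmQ]
  refine mul_lt_of_lt_one_right hmQ (abs_sub_lt_iff.2 ⟨?_, ?_⟩) <;>
    linarith [Int.le_ceil u, Int.ceil_lt_add_one u, Int.le_ceil w, Int.ceil_lt_add_one w]

theorem ncard_compl_fiveLattice_inter_box (r : ℕ) :
    (fiveLatticeᶜ ∩ box r).ncard = ∑ a ∈ boxSide r, #{b ∈ boxSide r | ¬ b ≡ 2 * a [ZMOD 5]} := by
  classical
  rw [ncard_inter_box, boxFinset, card_filter, sum_product]
  refine sum_congr rfl fun a _ => ?_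
  rw [card_filter]
  refine sum_congr rfl fun b _ => if_congr ?_ rfl rfl
  simp only [fiveLattice, Set.mem_compl_iff, Set.mem_ofPred_eq, Int.ModEq]
  omega

theorem abs_five_mul_card_row_sub_le {r : ℕ} (hr : 1 ≤ r) (a : ℤ) :
    |5 * (#{b ∈ boxSide r | ¬ b ≡ 2 * a [ZMOD 5]} : ℤ) - 4 * (2 * r - 1)| ≤ 4 := by
  have hsplit := card_filter_add_card_filter_not (s := boxSide r) (p := (· ≡ 2 * a [ZMOD 5]))
  rw [card_boxSide] at hsplit
  have hrow := Int.abs_mul_Ico_filter_modEq_card_sub_lt (1 - (r : ℤ)) r (2 * a) (m := 5)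
    (by norm_num) (by omega)
  simp only [boxSide] at hsplit ⊢
  rw [abs_lt] at hrow
  rw [abs_le]
  omega

theorem abs_five_mul_ncard_compl_fiveLattice_inter_box_sub_le {r : ℕ} (hr : 1 ≤ r) :
    |5 * ((fiveLatticeᶜ ∩ box r).ncard : ℤ) - 4 * (2 * r - 1) ^ 2| ≤ 4 * (2 * (r : ℤ) - 1) := by
  have hside : (#(boxSide r) : ℤ) = 2 * r - 1 := by
    rw [card_boxSide]
    omega
  rw [ncard_compl_fiveLattice_inter_box]
  have hsum : 5 * ((∑ a ∈ boxSide r, #{b ∈ boxSide r | ¬ b ≡ 2 * a [ZMOD 5]} : ℕ) : ℤ) -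
      4 * (2 * r - 1) ^ 2 =
      ∑ a ∈ boxSide r, (5 * (#{b ∈ boxSide r | ¬ b ≡ 2 * a [ZMOD 5]} : ℤ) - 4 * (2 * r - 1)) := by
    rw [sum_sub_distrib, ← mul_sum, sum_const, nsmul_eq_mul, hside]
    push_cast
    ring
  rw [hsum]
  calc _ ≤ ∑ a ∈ boxSide r, |5 * (#{b ∈ boxSide r | ¬ b ≡ 2 * a [ZMOD 5]} : ℤ) - 4 * (2 * r - 1)| :=
        abs_sum_le_sum_abs _ _
    _ ≤ ∑ _a ∈ boxSide r, 4 := sum_le_sum fun a _ => abs_five_mul_card_row_sub_le hr a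
    _ = 4 * (2 * r - 1) := by
        rw [sum_const, nsmul_eq_mul, hside, mul_comm]

theorem hasDensity_of_abs_sub_le {S : Set (ℤ × ℤ)} {d C : ℝ}
    (h : ∀ᶠ r : ℕ in atTop, |((S ∩ box r).ncard : ℝ) - d * (2 * r - 1) ^ 2| ≤ C * (2 * r - 1)) :
    HasDensity S d := by
  rw [HasDensity, tendsto_iff_norm_sub_tendsto_zero]
  refine squeeze_zero' (g := fun r : ℕ => C / (2 * (r : ℝ) - 1))
    (Eventually.of_forall fun _ => norm_nonneg _) ?_
    (tendsto_const_nhds.div_atTop tendsto_two_mul_sub_one_atTop)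
  filter_upwards [h, tendsto_two_mul_sub_one_atTop.eventually_gt_atTop 0] with r hr hpos
  have hsub : ((S ∩ box r).ncard : ℝ) / (2 * r - 1) ^ 2 - d =
      (((S ∩ box r).ncard : ℝ) - d * (2 * r - 1) ^ 2) / (2 * r - 1) ^ 2 := by
    field_simp
  calc ‖((S ∩ box r).ncard : ℝ) / (2 * r - 1) ^ 2 - d‖
      = |((S ∩ box r).ncard : ℝ) - d * (2 * r - 1) ^ 2| / (2 * r - 1) ^ 2 := by
        rw [Real.norm_eq_abs, hsub, abs_div, abs_of_pos (pow_pos hpos 2)]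
    _ ≤ C * (2 * r - 1) / (2 * r - 1) ^ 2 := by gcongr
    _ = C / (2 * r - 1) := by
        field_simp

theorem hasDensity_compl_fiveLattice : HasDensity fiveLatticeᶜ (4 / 5) := by
  refine hasDensity_of_abs_sub_le (C := 4 / 5) ?_
  filter_upwards [eventually_ge_atTop 1] with r hr
  have h : |5 * ((fiveLatticeᶜ ∩ box r).ncard : ℝ) - 4 * (2 * r - 1) ^ 2| ≤
      4 * (2 * (r : ℝ) - 1) := by
    exact_mod_cast abs_five_mul_ncard_compl_fiveLattice_inter_box_sub_le hr
  rw [abs_le] at h ⊢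
  constructor <;> linarith [h.1, h.2]

theorem maxDensity_degree_six :
    (∀ S : Set (ℤ × ℤ), (∀ x ∈ S, nbrCount S x ≤ 6) → upperDensity S ≤ 4 / 5) ∧
    ((∀ x ∈ {x : ℤ × ℤ | ¬ x.1 + 2 * x.2 ≡ 0 [ZMOD 5]},
        nbrCount {x : ℤ × ℤ | ¬ x.1 + 2 * x.2 ≡ 0 [ZMOD 5]} x ≤ 6) ∧
      HasDensity {x : ℤ × ℤ | ¬ x.1 + 2 * x.2 ≡ 0 [ZMOD 5]} (4 / 5)) := by
  refine ⟨fun S hS => ?_, fun x hx => nbrCount_compl_fiveLattice_le hx,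
    hasDensity_compl_fiveLattice⟩
  refine (upperDensity_le_of_nbrCount_add_le (k := 2) fun x hx => ?_).trans_eq (by norm_num)
  have := hS x hx
  omega
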